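/- The density p_Y of Y = X + W, where X has density p_X with finite variance and W is independent N(0, σ_W^2) noise, is differentiable and satisfies σ_W^2 p_Y'(y) = ∫ s p_X(s) φ_W(y−s) ds − y p_Y(y) for all real y. -/

import Mathlib

open MeasureTheory ProbabilityTheory Real

section aux

variable (σW2 : NNReal)

lemma gauss_hasDerivAt (x : ℝ) :
    HasDerivAt (gaussianPDFReal 0 σW2)
      ((-(x / σW2)) * gaussianPDFReal 0 σW2 x) x := by
  have : gaussianPDFReal 0 σW2 = fun x : ℝ =>
      (√(2 * π * σW2))⁻¹ * rexp (-(x - 0) ^ 2 / (2 * σW2)) := rfl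
  rw [this]
  have h1 : HasDerivAt (fun x : ℝ => -(x - 0) ^ 2 / (2 * σW2))
      (-(x / σW2)) x := by
    have : HasDerivAt (fun x : ℝ => -(x - 0) ^ 2 / (2 * (σW2 : ℝ)))
        (-(↑2 * (x - 0) ^ (2 - 1) * 1) / (2 * σW2)) x :=
      (((hasDerivAt_id x).sub_const 0).pow 2).neg.div_const (2 * (σW2 : ℝ))
    convert this using 1
    rcases eq_or_ne (σW2 : ℝ) 0 with h | h
    · simp [h]
    · field_simp
      ring
  have h2 := (h1.exp).const_mul (√(2 * π * (σW2 : ℝ)))⁻¹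
  refine h2.congr_deriv ?_
  beta_reduce
  ring

lemma gauss_le (x : ℝ) :
    gaussianPDFReal 0 σW2 x ≤ (√(2 * π * σW2))⁻¹ := by
  rw [gaussianPDFReal]
  have hC : (0:ℝ) ≤ (√(2 * π * σW2))⁻¹ := by positivity
  have : rexp (-(x - 0) ^ 2 / (2 * σW2)) ≤ 1 := by
    rw [Real.exp_le_one_iff]
    apply div_nonpos_of_nonpos_of_nonneg
    · simp [sq_nonneg]
    · positivity
  exact mul_le_of_le_one_right hC this

lemma gauss_mul_le (hσ : 0 < (σW2 : ℝ)) (x : ℝ) :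
    |x| * gaussianPDFReal 0 σW2 x ≤ (1 + 2 * σW2) * (√(2 * π * σW2))⁻¹ := by
  have hC : (0:ℝ) ≤ (√(2 * π * σW2))⁻¹ := by positivity
  set c : ℝ := (√(2 * π * (σW2:ℝ)))⁻¹ with hc
  have hsq : x ^ 2 * rexp (-(x - 0) ^ 2 / (2 * σW2)) ≤ 2 * σW2 := by
    have hv : (0:ℝ) < 2 * σW2 := by positivity
    have h1 : x ^ 2 / (2 * σW2) ≤ rexp (x ^ 2 / (2 * σW2)) := by
        linarith [Real.add_one_le_exp (x ^ 2 / (2 * (σW2:ℝ)))]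
    have h2 : x ^ 2 ≤ 2 * σW2 * rexp (x ^ 2 / (2 * σW2)) := by
        rw [div_le_iff₀ hv] at h1; linarith [h1]
    have h3 : rexp (-(x - 0) ^ 2 / (2 * σW2)) = (rexp (x ^ 2 / (2 * σW2)))⁻¹ := by
      rw [← Real.exp_neg]; ring_nf
    rw [h3]
    calc x ^ 2 * (rexp (x ^ 2 / (2 * σW2)))⁻¹
        ≤ 2 * σW2 * rexp (x ^ 2 / (2 * σW2)) * (rexp (x ^ 2 / (2 * σW2)))⁻¹ := by
          apply mul_le_mul_of_nonneg_right h2 (by positivity)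
      _ = 2 * σW2 := by field_simp
  have habs : |x| ≤ 1 + x ^ 2 := by nlinarith [abs_nonneg x, sq_abs x]
  have hexp : (0:ℝ) < rexp (-(x - 0) ^ 2 / (2 * σW2)) := Real.exp_pos _
  have : |x| * gaussianPDFReal 0 σW2 x ≤ (1 + x ^ 2) * (c * rexp (-(x - 0) ^ 2 / (2 * σW2))) := by
    rw [gaussianPDFReal]
    apply mul_le_mul_of_nonneg_right habs (by positivity)
  refine this.trans ?_
  have : (1 + x ^ 2) * (c * rexp (-(x - 0) ^ 2 / (2 * σW2)))
      = c * rexp (-(x - 0) ^ 2 / (2 * σW2)) + c * (x ^ 2 * rexp (-(x - 0) ^ 2 / (2 * σW2))) := by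
    ring
  rw [this]
  have h4 : c * rexp (-(x - 0) ^ 2 / (2 * σW2)) ≤ c :=
    mul_le_of_le_one_right hC (by
      rw [Real.exp_le_one_iff]
      apply div_nonpos_of_nonpos_of_nonneg
      · simp [sq_nonneg]
      · positivity)
  have h5 : c * (x ^ 2 * rexp (-(x - 0) ^ 2 / (2 * σW2))) ≤ c * (2 * σW2) :=
    mul_le_mul_of_nonneg_left hsq hC
  nlinarith [h4, h5]

end aux

/-- The density `p_Y` of `Y = X + W`, where `X` has density `pX` with finite second moment
and `W ~ N(0, σW²)` independent, is differentiable with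
`σW² p_Y'(y) = ∫ s pX(s) φ_W(y - s) ds − y p_Y(y)`. -/
theorem density_hasDerivAt (pX : ℝ → ℝ) (σW2 : NNReal) (hσ : 0 < (σW2 : ℝ))
    (hmeas : Measurable pX) (hnonneg : ∀ x, 0 ≤ pX x)
    (hdens : ∫ x, pX x = 1)
    (hL2 : Integrable (fun s => s ^ 2 * pX s)) :
    ∀ y : ℝ,
      HasDerivAt (fun t => ∫ s, pX s * gaussianPDFReal 0 σW2 (t - s))
        (((∫ s, s * pX s * gaussianPDFReal 0 σW2 (y - s))
            - y * ∫ s, pX s * gaussianPDFReal 0 σW2 (y - s)) / (σW2 : ℝ)) y := by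
  intro y
  have hpX_int : Integrable pX := integrable_of_integral_eq_one hdens
  set g : ℝ → ℝ := gaussianPDFReal 0 σW2 with hg
  set C : ℝ := (√(2 * π * σW2))⁻¹ with hCdef
  have hC : 0 ≤ C := by positivity
  have hgle : ∀ x, g x ≤ C := gauss_le σW2
  have hgnn : ∀ x, 0 ≤ g x := gaussianPDFReal_nonneg 0 σW2
  have hgmul : ∀ x, |x| * g x ≤ (1 + 2 * σW2) * C := gauss_mul_le σW2 hσ
  have hgm : Measurable g := measurable_gaussianPDFReal 0 σW2
  have hmeasF : ∀ t : ℝ, AEStronglyMeasurable (fun s => pX s * g (t - s)) volume :=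
    fun t => (hmeas.mul (hgm.comp (measurable_const.sub measurable_id))).aestronglyMeasurable
  have hmeasF' : ∀ t : ℝ, AEStronglyMeasurable
      (fun s => pX s * ((-((t - s) / σW2)) * g (t - s))) volume := by
    intro t
    exact (hmeas.mul ((((measurable_const.sub measurable_id).div_const _).neg).mul
      (hgm.comp (measurable_const.sub measurable_id)))).aestronglyMeasurable
  have hg2 : Integrable (fun s => pX s * g (y - s)) := by
    refine Integrable.mono' (hpX_int.const_mul C) (hmeasF y) (ae_of_all _ fun s => ?_)
    rw [Real.norm_eq_abs, abs_of_nonneg (mul_nonneg (hnonneg s) (hgnn _))]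
    calc pX s * g (y - s) ≤ pX s * C := mul_le_mul_of_nonneg_left (hgle _) (hnonneg s)
      _ = C * pX s := mul_comm _ _
  have hg1 : Integrable (fun s => s * pX s * g (y - s)) := by
    refine Integrable.mono' (hpX_int.const_mul ((1 + 2 * σW2) * C + |y| * C))
      ((measurable_id.mul hmeas).mul
        (hgm.comp (measurable_const.sub measurable_id))).aestronglyMeasurable
      (ae_of_all _ fun s => ?_)
    rw [Real.norm_eq_abs, abs_mul, abs_mul, abs_of_nonneg (hnonneg s), abs_of_nonneg (hgnn _)]
    have h1 : |s| ≤ |y - s| + |y| := by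
      have := abs_sub_abs_le_abs_sub s y
      have := abs_sub_comm s y
      nlinarith [abs_sub (s) (y)]
    have h2 : |s| * g (y - s) ≤ (1 + 2 * σW2) * C + |y| * C := by
      calc |s| * g (y - s) ≤ (|y - s| + |y|) * g (y - s) :=
            mul_le_mul_of_nonneg_right h1 (hgnn _)
        _ = |y - s| * g (y - s) + |y| * g (y - s) := by ring
        _ ≤ (1 + 2 * σW2) * C + |y| * C :=
            add_le_add (hgmul _) (mul_le_mul_of_nonneg_left (hgle _) (abs_nonneg y))
    calc |s| * pX s * g (y - s) = (|s| * g (y - s)) * pX s := by ring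
      _ ≤ ((1 + 2 * σW2) * C + |y| * C) * pX s :=
          mul_le_mul_of_nonneg_right h2 (hnonneg s)
  have key := hasDerivAt_integral_of_dominated_loc_of_deriv_le (μ := volume)
      (F := fun t s => pX s * g (t - s))
      (F' := fun t s => pX s * ((-((t - s) / σW2)) * g (t - s)))
      (x₀ := y) (s := Metric.ball y 1) (bound := fun s => pX s * ((1 + 2 * σW2) * C / σW2))
      (Metric.ball_mem_nhds y one_pos)
      (Filter.Eventually.of_forall fun t => hmeasF t)
      hg2
      (hmeasF' y)
      (ae_of_all _ fun s => by
        intro x _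
        rw [Real.norm_eq_abs, abs_mul, abs_of_nonneg (hnonneg s), abs_mul, abs_neg, abs_div,
          abs_of_nonneg (hgnn _), abs_of_nonneg (NNReal.coe_nonneg σW2)]
        apply mul_le_mul_of_nonneg_left _ (hnonneg s)
        rw [div_mul_eq_mul_div, div_le_div_iff₀ hσ hσ]
        exact mul_le_mul_of_nonneg_right (hgmul _) hσ.le)
      (hpX_int.mul_const _)
      (ae_of_all _ fun s => by
        intro x _
        have h1 : HasDerivAt (fun t : ℝ => t - s) 1 x := (hasDerivAt_id x).sub_const s
        have h2 := (gauss_hasDerivAt σW2 (x - s)).comp x h1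
        have h3 := h2.const_mul (pX s)
        simpa using h3)
  have heq : (fun s => pX s * ((-((y - s) / σW2)) * g (y - s)))
      = fun s => (s * pX s * g (y - s) - y * (pX s * g (y - s))) / σW2 := by
    funext s
    field_simp
    ring
  have hint : ∫ s, pX s * ((-((y - s) / σW2)) * g (y - s))
      = ((∫ s, s * pX s * g (y - s)) - y * ∫ s, pX s * g (y - s)) / σW2 := by
    rw [heq]
    rw [integral_div, integral_sub hg1 (hg2.const_mul y), MeasureTheory.integral_const_mul]
  have h := key.2
  rw [hint] at h
  exact h
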